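/- arXiv:1206.5590 — 5 statements merged into one kernel-verified Lean document; each statement's English description precedes it below -/
import Mathlib

section
/- Let A and B be right graft algebras over a field K. Extend ≺ to the augmented space by a≺1 = a and 1≺a = 0 for a in A (resp. B), and extend the product by 1·a = a·1 = a, 1·1 = 1. Define on A⊗̄B = (A⊗K) ⊕ (A⊗B) ⊕ (K⊗B) the operations (a⊗b)∗(a'⊗b') = (a∗a')⊗(b∗b'), (a⊗b)≺(a'⊗b') = (a∗a')⊗(b≺b') if b or b' lies in B, and (a⊗1)≺(a'⊗1) = (a≺a')⊗1. Then A⊗̄B is a dipterous algebra: both operations satisfy (x∗y)∗z = x∗(y∗z) and (x≺y)≺z = x≺(y∗z). -/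
open TensorProduct

/-- The subset of `(A⊕K) ⊗ (B⊕K)` corresponding to `A⊗̄B = (A⊗K) ⊕ (A⊗B) ⊕ (K⊗B)`:
spanned by `a⊗1`, `a⊗b` and `1⊗b`.  Here `A⊕K` is realized as `A × K`, `A` embedding
as `(a,0)` and the adjoined unit `1` being `(0,1)`. -/
def barTensorSet (K A B : Type*) [Field K] [AddCommGroup A] [Module K A]
    [AddCommGroup B] [Module K B] : Set ((A × K) ⊗[K] (B × K)) :=
  {z | ∃ (a : A) (b : B), z = ((a, (0 : K)) : A × K) ⊗ₜ[K] ((b, (0 : K)) : B × K)} ∪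
  {z | ∃ a : A, z = ((a, (0 : K)) : A × K) ⊗ₜ[K] (((0 : B), (1 : K)) : B × K)} ∪
  {z | ∃ b : B, z = (((0 : A), (1 : K)) : A × K) ⊗ₜ[K] ((b, (0 : K)) : B × K)}

/-- Auxiliary: a "trilinear" identity built from bilinear maps extends from a
generating set to its span. -/
lemma span3_ext {K M : Type*} [Field K] [AddCommGroup M] [Module K M] (s : Set M)
    (P Q R S : M →ₗ[K] M →ₗ[K] M)
    (h : ∀ x ∈ s, ∀ y ∈ s, ∀ z ∈ s, P (Q x y) z = R x (S y z)) :
    ∀ x ∈ Submodule.span K s, ∀ y ∈ Submodule.span K s, ∀ z ∈ Submodule.span K s,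
      P (Q x y) z = R x (S y z) := by
  intro x hx
  induction hx using Submodule.span_induction with
  | mem x hxs =>
    intro y hy
    induction hy using Submodule.span_induction with
    | mem y hys =>
      intro z hz
      induction hz using Submodule.span_induction with
      | mem z hzs => exact h x hxs y hys z hzs
      | zero => simp
      | add z z' _ _ h1 h2 => simp [map_add, h1, h2]
      | smul c z _ h1 => simp [map_smul, h1]
    | zero => intro z hz; simp
    | add y y' _ _ h1 h2 =>
      intro z hz
      simp only [map_add, LinearMap.add_apply]
      rw [h1 z hz, h2 z hz]
    | smul c y _ h1 =>
      intro z hz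
      simp only [map_smul, LinearMap.smul_apply]
      rw [h1 z hz]
  | zero => intro y hy z hz; simp
  | add x x' _ _ h1 h2 =>
    intro y hy z hz
    simp only [map_add, LinearMap.add_apply]
    rw [h1 y hy z hz, h2 y hy z hz]
  | smul c x _ h1 =>
    intro y hy z hz
    simp only [map_smul, LinearMap.smul_apply]
    rw [h1 y hy z hz]

/-- for right graft algebras `A`, `B`, the extended tensor product `A⊗̄B`
with `(a⊗b)∗(a'⊗b') = (a∗a')⊗(b∗b')`, `(a⊗b)≺(a'⊗b') = (a∗a')⊗(b≺b')` when `b` or `b'`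
lies in `B`, and `(a⊗1)≺(a'⊗1) = (a≺a')⊗1` (with the extensions `a≺1 = a`, `1≺a = 0`,
`1·a = a·1 = a`, `1·1 = 1`) is a dipterous algebra. -/
theorem barTensor_of_rightGraft_is_dipterous
    {K A B : Type*} [Field K] [AddCommGroup A] [Module K A] [AddCommGroup B] [Module K B]
    -- right graft structure on A
    (starA precA : A →ₗ[K] A →ₗ[K] A)
    (hA1 : ∀ x y z : A, starA (starA x y) z = starA x (starA y z))
    (hA2 : ∀ x y z : A, precA (precA x y) z = precA x (starA y z))
    (hA3 : ∀ x y z : A, precA (starA x y) z = starA x (precA y z))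
    -- right graft structure on B
    (starB precB : B →ₗ[K] B →ₗ[K] B)
    (hB1 : ∀ x y z : B, starB (starB x y) z = starB x (starB y z))
    (hB2 : ∀ x y z : B, precB (precB x y) z = precB x (starB y z))
    (hB3 : ∀ x y z : B, precB (starB x y) z = starB x (precB y z))
    -- unital extension of ∗ to A ⊕ K
    (star1A : (A × K) →ₗ[K] (A × K) →ₗ[K] (A × K))
    (h1A_l : ∀ x : A × K, star1A ((0 : A), (1 : K)) x = x)
    (h1A_r : ∀ x : A × K, star1A x ((0 : A), (1 : K)) = x)
    (h1A_res : ∀ a a' : A, star1A (a, (0 : K)) (a', (0 : K)) = (starA a a', (0 : K)))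
    -- unital extension of ∗ to B ⊕ K
    (star1B : (B × K) →ₗ[K] (B × K) →ₗ[K] (B × K))
    (h1B_l : ∀ x : B × K, star1B ((0 : B), (1 : K)) x = x)
    (h1B_r : ∀ x : B × K, star1B x ((0 : B), (1 : K)) = x)
    (h1B_res : ∀ b b' : B, star1B (b, (0 : K)) (b', (0 : K)) = (starB b b', (0 : K)))
    -- extension of ≺ to B ⊕ K : b ≺ 1 = b, 1 ≺ b = 0
    (prec1B : (B × K) →ₗ[K] (B × K) →ₗ[K] (B × K))
    (hp_res : ∀ b b' : B, prec1B (b, (0 : K)) (b', (0 : K)) = (precB b b', (0 : K)))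
    (hp_r : ∀ b : B, prec1B (b, (0 : K)) ((0 : B), (1 : K)) = (b, (0 : K)))
    (hp_l : ∀ b : B, prec1B ((0 : B), (1 : K)) (b, (0 : K)) = 0)
    -- the operations on A⊗̄B
    (starM precM : ((A × K) ⊗[K] (B × K)) →ₗ[K] ((A × K) ⊗[K] (B × K)) →ₗ[K]
      ((A × K) ⊗[K] (B × K)))
    (hstarM : ∀ (x x' : A × K) (y y' : B × K),
      starM (x ⊗ₜ[K] y) (x' ⊗ₜ[K] y') = (star1A x x') ⊗ₜ[K] (star1B y y'))
    (hprecM1 : ∀ (x x' : A × K) (y y' : B × K),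
      ((∃ b : B, y = (b, (0 : K))) ∨ (∃ b' : B, y' = (b', (0 : K)))) →
      precM (x ⊗ₜ[K] y) (x' ⊗ₜ[K] y') = (star1A x x') ⊗ₜ[K] (prec1B y y'))
    (hprecM2 : ∀ a a' : A,
      precM (((a, (0 : K)) : A × K) ⊗ₜ[K] (((0 : B), (1 : K)) : B × K))
            (((a', (0 : K)) : A × K) ⊗ₜ[K] (((0 : B), (1 : K)) : B × K))
        = (((precA a a', (0 : K)) : A × K) ⊗ₜ[K] (((0 : B), (1 : K)) : B × K))) :
    -- conclusion: A⊗̄B is dipterous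
    ∀ x y z : (A × K) ⊗[K] (B × K),
      x ∈ Submodule.span K (barTensorSet K A B) →
      y ∈ Submodule.span K (barTensorSet K A B) →
      z ∈ Submodule.span K (barTensorSet K A B) →
      starM (starM x y) z = starM x (starM y z) ∧
      precM (precM x y) z = precM x (starM y z) := by
  classical
  -- predicates describing elements of A⊕K, B⊕K appearing in generators
  set PA : (A × K) → Prop := fun u => (∃ a : A, u = (a, (0 : K))) ∨ u = ((0 : A), (1 : K))
    with hPA
  set PB : (B × K) → Prop := fun v => (∃ b : B, v = (b, (0 : K))) ∨ v = ((0 : B), (1 : K))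
    with hPB
  -- generator form
  have genForm : ∀ w ∈ barTensorSet K A B, ∃ u v, w = u ⊗ₜ[K] v ∧ PA u ∧ PB v ∧
      (v = ((0 : B), (1 : K)) → ∃ a : A, u = (a, (0 : K))) := by
    rintro w (( ⟨a, b, rfl⟩ | ⟨a, rfl⟩) | ⟨b, rfl⟩)
    · exact ⟨_, _, rfl, Or.inl ⟨a, rfl⟩, Or.inl ⟨b, rfl⟩, fun h => by
        exfalso; have := congrArg Prod.snd h; simp at this⟩
    · exact ⟨_, _, rfl, Or.inl ⟨a, rfl⟩, Or.inr rfl, fun _ => ⟨a, rfl⟩⟩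
    · exact ⟨_, _, rfl, Or.inr rfl, Or.inl ⟨b, rfl⟩, fun h => by
        exfalso; have := congrArg Prod.snd h; simp at this⟩
  -- associativity of star1A on PA elements
  have assocA : ∀ u u' u'' : A × K, PA u → PA u' → PA u'' →
      star1A (star1A u u') u'' = star1A u (star1A u' u'') := by
    rintro u u' u'' (⟨a, rfl⟩ | rfl) (⟨a', rfl⟩ | rfl) (⟨a'', rfl⟩ | rfl) <;>
      simp only [h1A_l, h1A_r, h1A_res, hA1]
  have assocB : ∀ v v' v'' : B × K, PB v → PB v' → PB v'' →
      star1B (star1B v v') v'' = star1B v (star1B v' v'') := by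
    rintro v v' v'' (⟨b, rfl⟩ | rfl) (⟨b', rfl⟩ | rfl) (⟨b'', rfl⟩ | rfl) <;>
      simp only [h1B_l, h1B_r, h1B_res, hB1]
  -- the graft relation for prec1B when the first argument lies in B
  have precLemB : ∀ (b : B) (v' v'' : B × K), PB v' → PB v'' →
      prec1B (prec1B (b, (0 : K)) v') v'' = prec1B (b, (0 : K)) (star1B v' v'') := by
    rintro b v' v'' (⟨b', rfl⟩ | rfl) (⟨b'', rfl⟩ | rfl) <;>
      simp only [h1B_l, h1B_r, h1B_res, hp_res, hp_r, hB2]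
  -- closure of star1B on B-part elements
  have stBcl : ∀ (b : B) (v : B × K), PB v → ∃ c : B, star1B (b, (0 : K)) v = (c, (0 : K)) := by
    rintro b v (⟨b', rfl⟩ | rfl)
    · exact ⟨starB b b', h1B_res b b'⟩
    · exact ⟨b, h1B_r _⟩
  have stBcl' : ∀ (b : B) (v : B × K), PB v → ∃ c : B, star1B v (b, (0 : K)) = (c, (0 : K)) := by
    rintro b v (⟨b', rfl⟩ | rfl)
    · exact ⟨starB b' b, h1B_res b' b⟩
    · exact ⟨b, h1B_l _⟩
  -- prec1B of a B-element with a PB element is a B-element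
  have pBcl : ∀ (b : B) (v : B × K), PB v → ∃ c : B, prec1B (b, (0 : K)) v = (c, (0 : K)) := by
    rintro b v (⟨b', rfl⟩ | rfl)
    · exact ⟨precB b b', hp_res b b'⟩
    · exact ⟨b, hp_r b⟩
  -- the star-associativity on generators
  have key1 : ∀ x ∈ barTensorSet K A B, ∀ y ∈ barTensorSet K A B, ∀ z ∈ barTensorSet K A B,
      starM (starM x y) z = starM x (starM y z) := by
    intro x hx y hy z hz
    obtain ⟨u, v, rfl, hu, hv, -⟩ := genForm x hx
    obtain ⟨u', v', rfl, hu', hv', -⟩ := genForm y hy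
    obtain ⟨u'', v'', rfl, hu'', hv'', -⟩ := genForm z hz
    rw [hstarM, hstarM, hstarM, hstarM, assocA u u' u'' hu hu' hu'',
      assocB v v' v'' hv hv' hv'']
  -- the prec law on generators
  have key2 : ∀ x ∈ barTensorSet K A B, ∀ y ∈ barTensorSet K A B, ∀ z ∈ barTensorSet K A B,
      precM (precM x y) z = precM x (starM y z) := by
    intro x hx y hy z hz
    obtain ⟨u, v, rfl, hu, hv, hv1⟩ := genForm x hx
    obtain ⟨u', v', rfl, hu', hv', hv'1⟩ := genForm y hy
    obtain ⟨u'', v'', rfl, hu'', hv'', hv''1⟩ := genForm z hz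
    rcases hv with ⟨b, rfl⟩ | rfl
    · -- Case C : v = (b,0)
      obtain ⟨c, hc⟩ := pBcl b v' hv'
      rw [hprecM1 u u' _ v' (Or.inl ⟨b, rfl⟩), hstarM, hc,
        hprecM1 _ u'' _ v'' (Or.inl ⟨c, rfl⟩), ← hc,
        hprecM1 u _ _ _ (Or.inl ⟨b, rfl⟩),
        assocA u u' u'' hu hu' hu'', precLemB b v' v'' hv' hv'']
    · -- v = (0,1), hence u = (a,0)
      obtain ⟨a, rfl⟩ := hv1 rfl
      rcases hv' with ⟨b', rfl⟩ | rfl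
      · -- Case B : v' = (b',0): both sides vanish
        obtain ⟨c, hc⟩ := stBcl b' v'' hv''
        rw [hprecM1 _ u' _ _ (Or.inr ⟨b', rfl⟩), hp_l, TensorProduct.tmul_zero,
          LinearMap.map_zero, LinearMap.zero_apply, hstarM, hc,
          hprecM1 _ _ _ _ (Or.inr ⟨c, rfl⟩), hp_l, TensorProduct.tmul_zero]
      · -- v' = (0,1), hence u' = (a',0)
        obtain ⟨a', rfl⟩ := hv'1 rfl
        rcases hv'' with ⟨b'', rfl⟩ | rfl
        · -- v'' = (b'',0): both sides vanish
          rw [hprecM2, hprecM1 _ u'' _ _ (Or.inr ⟨b'', rfl⟩), hp_l,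
            TensorProduct.tmul_zero, hstarM, h1B_l,
            hprecM1 _ _ _ _ (Or.inr ⟨b'', rfl⟩), hp_l, TensorProduct.tmul_zero]
        · -- all three are units: use hprecM2 and hA2
          obtain ⟨a'', rfl⟩ := hv''1 rfl
          rw [hprecM2, hprecM2, hstarM, h1A_res, h1B_l, hprecM2, hA2]
  intro x y z hx hy hz
  exact ⟨span3_ext _ starM starM starM starM key1 x hx y hy z hz,
    span3_ext _ precM precM precM starM key2 x hx y hy z hz⟩
end

section
/- The formal power series F(x) = x/(1−x)^3 and G(x) = the compositional inverse of x/(1+x)^3 satisfy G(−F(−x)) = x as formal power series; equivalently, if F_BG(x) denotes the series with F_BG^{-1}(x) = x/(1+x)^3 and F_{BG^!}(x) = x/(1−x)^3, then F_BG(−F_{BG^!}(−x)) = x. -/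
open PowerSeries

/-- Composition `f(g(x))` of formal power series (meaningful when `g` has zero constant
term: the coefficient of `xⁿ` only involves `gᵏ` for `k ≤ n`). -/
noncomputable def PowerSeries.comp (f g : PowerSeries ℚ) : PowerSeries ℚ :=
  PowerSeries.mk fun n =>
    PowerSeries.coeff n (∑ k ∈ Finset.range (n + 1), (PowerSeries.coeff k f) • g ^ k)

namespace PowerSeries

theorem constantCoeff_rescale {R : Type*} [CommSemiring R] (a : R) (f : PowerSeries R) :
    constantCoeff (rescale a f) = constantCoeff f := by
  rw [← coeff_zero_eq_constantCoeff_apply, coeff_rescale, pow_zero, one_mul,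
    coeff_zero_eq_constantCoeff_apply]

theorem rescale_inv {k : Type*} [Field k] (a : k) (f : PowerSeries k) :
    rescale a f⁻¹ = (rescale a f)⁻¹ := by
  by_cases hf : constantCoeff f = 0
  · rw [inv_eq_zero.mpr hf, map_zero, eq_comm, inv_eq_zero, constantCoeff_rescale, hf]
  · rw [eq_inv_iff_mul_eq_one (by rwa [constantCoeff_rescale]), ← map_mul,
      PowerSeries.inv_mul_cancel _ hf, map_one]

theorem rescale_neg_one_X_mul_inv_one_sub_pow {k : Type*} [Field k] (n : ℕ) :
    rescale (-1 : k) (X * ((1 - X)⁻¹) ^ n) = -(X * ((1 + X)⁻¹) ^ n) := by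
  simp only [map_mul, map_pow, rescale_inv, map_sub, map_one, rescale_X, map_neg, one_mul,
    sub_neg_eq_add, neg_mul]

end PowerSeries

theorem koszul_dual_series_inverse_general (F P G : PowerSeries ℚ)
    (hF : F = PowerSeries.X * ((1 - PowerSeries.X)⁻¹) ^ 3)
    (hP : P = PowerSeries.X * ((1 + PowerSeries.X)⁻¹) ^ 3)
    (hGP : PowerSeries.comp G P = PowerSeries.X) :
    PowerSeries.comp G (-(PowerSeries.rescale (-1) F)) = PowerSeries.X := by
  rwa [hF, PowerSeries.rescale_neg_one_X_mul_inv_one_sub_pow, neg_neg, ← hP]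

/-- let `F(x) = x/(1−x)³` and let `G` be the compositional inverse of
`P(x) = x/(1+x)³`.  Then `G(−F(−x)) = x`. -/
theorem koszul_dual_series_inverse (F P G : PowerSeries ℚ)
    (hF : F = PowerSeries.X * ((1 - PowerSeries.X)⁻¹) ^ 3)
    (hP : P = PowerSeries.X * ((1 + PowerSeries.X)⁻¹) ^ 3)
    (hG0 : PowerSeries.constantCoeff G = 0)
    (hGP : PowerSeries.comp G P = PowerSeries.X)
    (hPG : PowerSeries.comp P G = PowerSeries.X) :
    PowerSeries.comp G (-(PowerSeries.rescale (-1) F)) = PowerSeries.X :=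
  koszul_dual_series_inverse_general F P G hF hP hGP
end

section
/- The augmentation ideal M of BT, equipped with concatenation m, left graft ≻ and right graft ≺, satisfies for all x, y, z ∈ M: (xy)≻z = x≻(y≻z), (x≻y)z = x≻(yz), (x≺y)≺z = x≺(yz), (xy)≺z = x(y≺z), and (x≻y)≺z = x≻(y≺z); hence (M, m, ≻, ≺) is a bigraft algebra. -/
/-- A planar rooted tree with `{l,r}`-decorated edges (admissible: no `r`-edge left of an
`l`-edge at a vertex): a tree is `B(F ⊗ G)` with `F` the `l`-children and `G` the
`r`-children. -/
inductive DTree : Type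
  | node : List DTree → List DTree → DTree

def DForest : Type := { l : List DTree // l ≠ [] }

/-- Left graft on lists: graft `g` on the root of the first tree, on the left. -/
def succL (g : List DTree) : List DTree → List DTree
  | [] => []
  | (DTree.node l r) :: rest => DTree.node (g ++ l) r :: rest

/-- Right graft on lists: graft `f` on the root of the last tree of the first argument,
on the right. -/
def precL : List DTree → List DTree → List DTree
  | [], _ => []
  | [DTree.node l r], f => [DTree.node l (r ++ f)]
  | t :: t' :: ts, f => t :: precL (t' :: ts) f

theorem succL_ne (g : List DTree) : ∀ f : List DTree, f ≠ [] → succL g f ≠ [] := by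
  intro f hf
  match f with
  | [] => exact absurd rfl hf
  | (DTree.node l r) :: rest => simp [succL]

theorem precL_ne : ∀ (g f : List DTree), g ≠ [] → precL g f ≠ [] := by
  intro g f hg
  match g with
  | [] => exact absurd rfl hg
  | [DTree.node l r] => simp [precL]
  | t :: t' :: ts => simp [precL]

def catF (x y : DForest) : DForest :=
  ⟨x.1 ++ y.1, fun h => x.2 (List.append_eq_nil_iff.mp h).1⟩

/-- Left graft `x ≻ y` of forests. -/
def succF (x y : DForest) : DForest := ⟨succL x.1 y.1, succL_ne x.1 y.1 y.2⟩

/-- Right graft `x ≺ y` of forests. -/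
def precF (x y : DForest) : DForest := ⟨precL x.1 y.1, precL_ne x.1 y.1 x.2⟩

/-- Bilinear extension to the free vector space `M = K[DForest]` (the augmentation
ideal of `BT`) of a binary operation on forests. -/
noncomputable def lift2 (K : Type*) [Field K] (f : DForest → DForest → DForest) :
    (DForest →₀ K) →ₗ[K] (DForest →₀ K) →ₗ[K] (DForest →₀ K) :=
  Finsupp.lift ((DForest →₀ K) →ₗ[K] (DForest →₀ K)) K DForest
    (fun a => Finsupp.lift (DForest →₀ K) K DForest
      (fun b => Finsupp.single (f a b) (1 : K)))

/-! Each identity is multilinear in `x, y, z`, so it suffices to check it on basis forests,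
where it becomes an identity of lists of trees. Left grafting only touches the root of the
first tree and right grafting only the root of the last one; these two root operations
commute, and since the middle forest is nonempty, concatenating on the far side never
changes which tree is grafted on. -/

namespace DTree

def graftLeft (g : List DTree) : DTree → DTree
  | node l r => node (g ++ l) r

def graftRight (f : List DTree) : DTree → DTree
  | node l r => node l (r ++ f)

theorem graftLeft_append (g g' : List DTree) (t : DTree) :
    graftLeft (g ++ g') t = graftLeft g (graftLeft g' t) := by
  cases t; simp [graftLeft]

theorem graftRight_graftRight (f f' : List DTree) (t : DTree) :
    graftRight f' (graftRight f t) = graftRight (f ++ f') t := by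
  cases t; simp [graftRight]

theorem graftRight_graftLeft (f g : List DTree) (t : DTree) :
    graftRight f (graftLeft g t) = graftLeft g (graftRight f t) := by
  cases t; rfl

end DTree

theorem succL_cons (g : List DTree) (t : DTree) (ts : List DTree) :
    succL g (t :: ts) = t.graftLeft g :: ts := by
  cases t; rfl

theorem precL_singleton (t : DTree) (f : List DTree) : precL [t] f = [t.graftRight f] := by
  cases t; rfl

theorem precL_cons_of_ne_nil (s : DTree) (ts f : List DTree) (hts : ts ≠ []) :
    precL (s :: ts) f = s :: precL ts f := by
  obtain ⟨t, ts, rfl⟩ := List.exists_cons_of_ne_nil hts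
  rw [precL]

theorem precL_append (g g' f : List DTree) (hg' : g' ≠ []) :
    precL (g ++ g') f = g ++ precL g' f := by
  induction g with
  | nil => rfl
  | cons s g ih =>
    rw [List.cons_append, precL_cons_of_ne_nil _ _ _ (by simp [hg']), ih, List.cons_append]

theorem precL_append_singleton (ts : List DTree) (t : DTree) (f : List DTree) :
    precL (ts ++ [t]) f = ts ++ [t.graftRight f] := by
  rw [precL_append _ _ _ (List.cons_ne_nil t []), precL_singleton]

theorem succL_append (g g' f : List DTree) : succL (g ++ g') f = succL g (succL g' f) := by
  cases f with
  | nil => rfl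
  | cons t ts => simp only [succL_cons, DTree.graftLeft_append]

theorem succL_append_right (g f f' : List DTree) (hf : f ≠ []) :
    succL g f ++ f' = succL g (f ++ f') := by
  obtain ⟨t, ts, rfl⟩ := List.exists_cons_of_ne_nil hf
  simp only [succL_cons, List.cons_append]

theorem precL_precL (g f f' : List DTree) : precL (precL g f) f' = precL g (f ++ f') := by
  induction g using List.reverseRecOn with
  | nil => rfl
  | append_singleton ts t _ =>
    simp only [precL_append_singleton, DTree.graftRight_graftRight]

theorem precL_succL (g f f' : List DTree) (hf : f ≠ []) :
    precL (succL g f) f' = succL g (precL f f') := by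
  obtain ⟨t, ts, rfl⟩ := List.exists_cons_of_ne_nil hf
  rcases eq_or_ne ts [] with rfl | hts
  · rw [succL_cons, precL_singleton, precL_singleton, succL_cons, DTree.graftRight_graftLeft]
  · rw [succL_cons, precL_cons_of_ne_nil _ _ _ hts, precL_cons_of_ne_nil _ _ _ hts, succL_cons]

theorem lift2_single_single (K : Type*) [Field K] (f : DForest → DForest → DForest)
    (a b : DForest) (r s : K) :
    lift2 K f (Finsupp.single a r) (Finsupp.single b s) = Finsupp.single (f a b) (r * s) := by
  simp [lift2]

theorem lift2_lift2 (K : Type*) [Field K] {f g h k : DForest → DForest → DForest}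
    (H : ∀ a b c, f (g a b) c = h a (k b c)) (x y z : DForest →₀ K) :
    lift2 K f (lift2 K g x y) z = lift2 K h x (lift2 K k y z) := by
  induction x using Finsupp.induction_linear with
  | zero => simp
  | add => simp [*]
  | single a r =>
    induction y using Finsupp.induction_linear with
    | zero => simp
    | add => simp [*]
    | single b s =>
      induction z using Finsupp.induction_linear with
      | zero => simp
      | add => simp [*]
      | single c t => simp only [lift2_single_single, H, mul_assoc]

/-- on the augmentation ideal `M` of `BT`, with concatenation `m`,
left graft `≻` and right graft `≺`, one has for all `x, y, z ∈ M`: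
`(xy)≻z = x≻(y≻z)`, `(x≻y)z = x≻(yz)`, `(x≺y)≺z = x≺(yz)`, `(xy)≺z = x(y≺z)`,
`(x≻y)≺z = x≻(y≺z)` (and `m` is associative); hence `(M, m, ≻, ≺)` is a bigraft
algebra. -/
theorem M_is_bigraft (K : Type*) [Field K] :
    ∀ x y z : DForest →₀ K,
      lift2 K catF (lift2 K catF x y) z = lift2 K catF x (lift2 K catF y z) ∧
      lift2 K succF (lift2 K catF x y) z = lift2 K succF x (lift2 K succF y z) ∧
      lift2 K catF (lift2 K succF x y) z = lift2 K succF x (lift2 K catF y z) ∧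
      lift2 K precF (lift2 K precF x y) z = lift2 K precF x (lift2 K catF y z) ∧
      lift2 K precF (lift2 K catF x y) z = lift2 K catF x (lift2 K precF y z) ∧
      lift2 K precF (lift2 K succF x y) z = lift2 K succF x (lift2 K precF y z) := by
  intro x y z
  exact ⟨lift2_lift2 K (fun a b c => Subtype.ext (List.append_assoc a.1 b.1 c.1)) x y z,
    lift2_lift2 K (fun a b c => Subtype.ext (succL_append a.1 b.1 c.1)) x y z,
    lift2_lift2 K (fun a b c => Subtype.ext (succL_append_right a.1 b.1 c.1 b.2)) x y z,
    lift2_lift2 K (fun a b c => Subtype.ext (precL_precL a.1 b.1 c.1)) x y z,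
    lift2_lift2 K (fun a b c => Subtype.ext (precL_append a.1 b.1 c.1 b.2)) x y z,
    lift2_lift2 K (fun a b c => Subtype.ext (precL_succL a.1 b.1 c.1 b.2)) x y z⟩
end

section
/- Let A be an L-algebra (two bilinear operations ≻, ≺ with (x≻y)≺z = x≻(y≺z)). On the augmentation ideal T̄(A) of the tensor algebra over A, define (a₁⋯a_p)≻(b₁⋯b_q) = (a₁≻(⋯(a_{p−1}≻(a_p≻b₁))⋯))·b₂⋯b_q and (a₁⋯a_p)≺(b₁⋯b_q) = a₁⋯a_{p−1}·((⋯((a_p≺b₁)≺b₂)⋯)≺b_q), with the concatenation product. Then (T̄(A), concatenation, ≻, ≺) is a bigraft algebra. -/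
open TensorAlgebra

/-- The augmentation ideal `T̄(A) = ⊕_{n≥1} A^{⊗n}` of the tensor algebra: the span of
the nonempty products `a₁⋯a_p` of elements of `A`. -/
def augIdeal (K : Type*) (A : Type*) [Field K] [AddCommGroup A] [Module K A] :
    Submodule K (TensorAlgebra K A) :=
  Submodule.span K
    {x | ∃ l : List A, l ≠ [] ∧ x = (l.map (TensorAlgebra.ι K)).prod}

set_option maxHeartbeats 1600000 in
/-- let `(A, ≻, ≺)` be an L-algebra.  On `T̄(A)`, with the concatenation
(tensor) product and the operations determined by
`(a₁⋯a_p) ≻ (b₁⋯b_q) = (a₁≻(⋯(a_p≻b₁)⋯))·b₂⋯b_q` and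
`(a₁⋯a_p) ≺ (b₁⋯b_q) = a₁⋯a_{p−1}·((⋯(a_p≺b₁)⋯)≺b_q)`,
`(T̄(A), ·, ≻, ≺)` is a bigraft algebra. -/
theorem tensorAlgebra_of_L_is_bigraft
    {K A : Type*} [Field K] [AddCommGroup A] [Module K A]
    (succA precA : A →ₗ[K] A →ₗ[K] A)
    (hL : ∀ x y z : A, precA (succA x y) z = succA x (precA y z))
    (succT precT : TensorAlgebra K A →ₗ[K] TensorAlgebra K A →ₗ[K] TensorAlgebra K A)
    (hs1 : ∀ a b : A,
      succT (TensorAlgebra.ι K a) (TensorAlgebra.ι K b) = TensorAlgebra.ι K (succA a b))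
    (hs2 : ∀ (a b : A) (y : TensorAlgebra K A), y ∈ augIdeal K A →
      succT (TensorAlgebra.ι K a) (TensorAlgebra.ι K b * y)
        = TensorAlgebra.ι K (succA a b) * y)
    (hs3 : ∀ (a : A) (x y : TensorAlgebra K A), x ∈ augIdeal K A → y ∈ augIdeal K A →
      succT (TensorAlgebra.ι K a * x) y = succT (TensorAlgebra.ι K a) (succT x y))
    (hp1 : ∀ a b : A,
      precT (TensorAlgebra.ι K a) (TensorAlgebra.ι K b) = TensorAlgebra.ι K (precA a b))
    (hp2 : ∀ (a b : A) (x : TensorAlgebra K A), x ∈ augIdeal K A →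
      precT (x * TensorAlgebra.ι K a) (TensorAlgebra.ι K b)
        = x * TensorAlgebra.ι K (precA a b))
    (hp3 : ∀ (b : A) (x y : TensorAlgebra K A), x ∈ augIdeal K A → y ∈ augIdeal K A →
      precT x (y * TensorAlgebra.ι K b) = precT (precT x y) (TensorAlgebra.ι K b)) :
    ∀ x y z : TensorAlgebra K A,
      x ∈ augIdeal K A → y ∈ augIdeal K A → z ∈ augIdeal K A →
      (x * y) * z = x * (y * z) ∧
      succT (x * y) z = succT x (succT y z) ∧
      succT x y * z = succT x (y * z) ∧
      precT (precT x y) z = precT x (y * z) ∧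
      precT (x * y) z = x * precT y z ∧
      precT (succT x y) z = succT x (precT y z) := by
  intro x y z hx hy hz
  -- basic membership facts
  have hPmem : ∀ l : List A, l ≠ [] →
      (l.map (TensorAlgebra.ι K)).prod ∈ augIdeal K A := by
    intro l hl
    exact Submodule.subset_span ⟨l, hl, rfl⟩
  have hιmem : ∀ a : A, TensorAlgebra.ι K a ∈ augIdeal K A := by
    intro a
    simpa using hPmem [a] (by simp)
  -- closure under multiplication
  have hmulI : ∀ u ∈ augIdeal K A, ∀ v ∈ augIdeal K A, u * v ∈ augIdeal K A := by
    intro u hu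
    induction hu using Submodule.span_induction with
    | mem u hu =>
      intro v hv
      induction hv using Submodule.span_induction with
      | mem v hv =>
        obtain ⟨l, hl, rfl⟩ := hu
        obtain ⟨m, hm, rfl⟩ := hv
        have h : (l.map (TensorAlgebra.ι K)).prod * (m.map (TensorAlgebra.ι K)).prod
            = ((l ++ m).map (TensorAlgebra.ι K)).prod := by
          simp
        rw [h]
        exact hPmem _ (by simp [hl])
      | zero => simpa using Submodule.zero_mem (augIdeal K A)
      | add v w hv hw ihv ihw =>
        simpa [mul_add] using Submodule.add_mem _ ihv ihw
      | smul c v hv ihv =>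
        simpa [mul_smul_comm] using Submodule.smul_mem _ c ihv
    | zero =>
      intro v hv
      simpa using Submodule.zero_mem (augIdeal K A)
    | add u w hu hw ihu ihw =>
      intro v hv
      simpa [add_mul] using Submodule.add_mem _ (ihu v hv) (ihw v hv)
    | smul c u hu ihu =>
      intro v hv
      simpa [smul_mul_assoc] using Submodule.smul_mem _ c (ihu v hv)
  -- closure of succT with a single generator on the left
  have hsuccIone : ∀ a : A, ∀ w ∈ augIdeal K A,
      succT (TensorAlgebra.ι K a) w ∈ augIdeal K A := by
    intro a w hw
    induction hw using Submodule.span_induction with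
    | mem w hw =>
      obtain ⟨m, hm, rfl⟩ := hw
      match m, hm with
      | [b], _ =>
        simp only [List.map_cons, List.map_nil, List.prod_cons, List.prod_nil, mul_one]
        rw [hs1]
        exact hιmem _
      | b :: c :: m', _ =>
        have h : ((b :: c :: m').map (TensorAlgebra.ι K)).prod
            = TensorAlgebra.ι K b * ((c :: m').map (TensorAlgebra.ι K)).prod := by simp
        rw [h, hs2 a b _ (hPmem _ (by simp))]
        exact hmulI _ (hιmem _) _ (hPmem _ (by simp))
    | zero => simpa using Submodule.zero_mem (augIdeal K A)
    | add u v hu hv ihu ihv =>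
      simpa [map_add] using Submodule.add_mem _ ihu ihv
    | smul c u hu ihu =>
      simpa [map_smul] using Submodule.smul_mem _ c ihu
  -- closure of succT, generator version on the left
  have hsuccIgen : ∀ l : List A, l ≠ [] → ∀ v ∈ augIdeal K A,
      succT ((l.map (TensorAlgebra.ι K)).prod) v ∈ augIdeal K A := by
    intro l
    induction l with
    | nil => intro h; exact absurd rfl h
    | cons a l' ih =>
      intro _ v hv
      cases l' with
      | nil =>
        simpa using hsuccIone a v hv
      | cons c l'' =>
        have hne : c :: l'' ≠ [] := by simp
        have h : ((a :: c :: l'').map (TensorAlgebra.ι K)).prod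
            = TensorAlgebra.ι K a * ((c :: l'').map (TensorAlgebra.ι K)).prod := by simp
        rw [h, hs3 a _ v (hPmem _ hne) hv]
        exact hsuccIone a _ (ih hne v hv)
  -- closure of succT
  have hsuccI : ∀ u ∈ augIdeal K A, ∀ v ∈ augIdeal K A,
      succT u v ∈ augIdeal K A := by
    intro u hu v hv
    induction hu using Submodule.span_induction with
    | mem u hu =>
      obtain ⟨l, hl, rfl⟩ := hu
      exact hsuccIgen l hl v hv
    | zero => simpa using Submodule.zero_mem (augIdeal K A)
    | add u w hu hw ihu ihw =>
      simpa [map_add] using Submodule.add_mem _ ihu ihw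
    | smul c u hu ihu =>
      simpa [map_smul] using Submodule.smul_mem _ c ihu
  -- closure of precT with a single generator on the right
  have hprecIone : ∀ b : A, ∀ w ∈ augIdeal K A,
      precT w (TensorAlgebra.ι K b) ∈ augIdeal K A := by
    intro b w hw
    induction hw using Submodule.span_induction with
    | mem w hw =>
      obtain ⟨m, hm, rfl⟩ := hw
      rcases List.eq_nil_or_concat m with rfl | ⟨m', c, rfl⟩
      · exact absurd rfl hm
      simp only [List.concat_eq_append] at hm ⊢
      rcases eq_or_ne m' [] with rfl | hne
      · simp only [List.nil_append, List.map_cons, List.map_nil, List.prod_cons,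
          List.prod_nil, mul_one]
        rw [hp1]
        exact hιmem _
      · have h : ((m' ++ [c]).map (TensorAlgebra.ι K)).prod
            = (m'.map (TensorAlgebra.ι K)).prod * TensorAlgebra.ι K c := by simp
        rw [h, hp2 c b _ (hPmem _ hne)]
        exact hmulI _ (hPmem _ hne) _ (hιmem _)
    | zero => simpa using Submodule.zero_mem (augIdeal K A)
    | add u v hu hv ihu ihv =>
      simpa [map_add] using Submodule.add_mem _ ihu ihv
    | smul c u hu ihu =>
      simpa [map_smul] using Submodule.smul_mem _ c ihu
  -- closure of precT, generator version on the right
  have hprecIgen : ∀ n : List A, n ≠ [] → ∀ u ∈ augIdeal K A,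
      precT u ((n.map (TensorAlgebra.ι K)).prod) ∈ augIdeal K A := by
    intro n
    induction n using List.reverseRecOn with
    | nil => intro h; exact absurd rfl h
    | append_singleton n' b ih =>
      intro _ u hu
      rcases eq_or_ne n' [] with rfl | hne
      · simpa using hprecIone b u hu
      · have h : ((n' ++ [b]).map (TensorAlgebra.ι K)).prod
            = (n'.map (TensorAlgebra.ι K)).prod * TensorAlgebra.ι K b := by simp
        rw [h, hp3 b u _ hu (hPmem _ hne)]
        exact hprecIone b _ (ih hne u hu)
  -- closure of precT
  have hprecI : ∀ u ∈ augIdeal K A, ∀ v ∈ augIdeal K A,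
      precT u v ∈ augIdeal K A := by
    intro u hu v hv
    induction hv using Submodule.span_induction with
    | mem v hv =>
      obtain ⟨n, hn, rfl⟩ := hv
      exact hprecIgen n hn u hu
    | zero => simpa using Submodule.zero_mem (augIdeal K A)
    | add v w hv hw ihv ihw =>
      simpa [map_add] using Submodule.add_mem _ ihv ihw
    | smul c v hv ihv =>
      simpa [map_smul] using Submodule.smul_mem _ c ihv
  -- Statement 3, single generator on the left
  have L3a : ∀ a : A, ∀ v ∈ augIdeal K A, ∀ w ∈ augIdeal K A,
      succT (TensorAlgebra.ι K a) v * w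
        = succT (TensorAlgebra.ι K a) (v * w) := by
    intro a v hv
    induction hv using Submodule.span_induction with
    | mem v hv =>
      intro w hw
      obtain ⟨m, hm, rfl⟩ := hv
      match m, hm with
      | [b], _ =>
        simp only [List.map_cons, List.map_nil, List.prod_cons, List.prod_nil, mul_one]
        rw [hs1, hs2 a b w hw]
      | b :: c :: m', _ =>
        have hPm' : ((c :: m').map (TensorAlgebra.ι K)).prod ∈ augIdeal K A :=
          hPmem _ (by simp)
        have h : ((b :: c :: m').map (TensorAlgebra.ι K)).prod
            = TensorAlgebra.ι K b * ((c :: m').map (TensorAlgebra.ι K)).prod := by simp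
        rw [h, hs2 a b _ hPm', mul_assoc, mul_assoc,
          hs2 a b _ (hmulI _ hPm' _ hw)]
    | zero => intro w hw; simp
    | add v v' hv hv' ihv ihv' =>
      intro w hw
      simp only [map_add, LinearMap.add_apply, add_mul, ihv w hw, ihv' w hw]
    | smul c v hv ihv =>
      intro w hw
      simp only [map_smul, LinearMap.smul_apply, smul_mul_assoc, ihv w hw]
  -- Statement 3, generator version on the left
  have L3gen : ∀ l : List A, l ≠ [] → ∀ v ∈ augIdeal K A, ∀ w ∈ augIdeal K A,
      succT ((l.map (TensorAlgebra.ι K)).prod) v * w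
        = succT ((l.map (TensorAlgebra.ι K)).prod) (v * w) := by
    intro l
    induction l with
    | nil => intro h; exact absurd rfl h
    | cons a l' ih =>
      intro _ v hv w hw
      cases l' with
      | nil => simpa using L3a a v hv w hw
      | cons c l'' =>
        have hne : c :: l'' ≠ [] := by simp
        have hP : ((c :: l'').map (TensorAlgebra.ι K)).prod ∈ augIdeal K A := hPmem _ hne
        have h : ((a :: c :: l'').map (TensorAlgebra.ι K)).prod
            = TensorAlgebra.ι K a * ((c :: l'').map (TensorAlgebra.ι K)).prod := by simp
        rw [h, hs3 a _ v hP hv, L3a a _ (hsuccI _ hP v hv) w hw,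
          ih hne v hv w hw, hs3 a _ (v * w) hP (hmulI v hv w hw)]
  -- Statement 3
  have L3 : ∀ u ∈ augIdeal K A, ∀ v ∈ augIdeal K A, ∀ w ∈ augIdeal K A,
      succT u v * w = succT u (v * w) := by
    intro u hu
    induction hu using Submodule.span_induction with
    | mem u hu =>
      obtain ⟨l, hl, rfl⟩ := hu
      exact L3gen l hl
    | zero => intro v hv w hw; simp
    | add u u' hu hu' ihu ihu' =>
      intro v hv w hw
      simp only [map_add, LinearMap.add_apply, add_mul, ihu v hv w hw, ihu' v hv w hw]
    | smul c u hu ihu =>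
      intro v hv w hw
      simp only [map_smul, LinearMap.smul_apply, smul_mul_assoc, ihu v hv w hw]
  -- Statement 2, generator version
  have L2gen : ∀ l : List A, l ≠ [] → ∀ v ∈ augIdeal K A, ∀ w ∈ augIdeal K A,
      succT ((l.map (TensorAlgebra.ι K)).prod * v) w
        = succT ((l.map (TensorAlgebra.ι K)).prod) (succT v w) := by
    intro l
    induction l with
    | nil => intro h; exact absurd rfl h
    | cons a l' ih =>
      intro _ v hv w hw
      cases l' with
      | nil =>
        simpa using hs3 a v w hv hw
      | cons c l'' =>
        have hne : c :: l'' ≠ [] := by simp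
        have hP : ((c :: l'').map (TensorAlgebra.ι K)).prod ∈ augIdeal K A := hPmem _ hne
        have h : ((a :: c :: l'').map (TensorAlgebra.ι K)).prod
            = TensorAlgebra.ι K a * ((c :: l'').map (TensorAlgebra.ι K)).prod := by simp
        rw [h, mul_assoc, hs3 a _ w (hmulI _ hP v hv) hw, ih hne v hv w hw,
          hs3 a _ (succT v w) hP (hsuccI v hv w hw)]
  -- Statement 2
  have L2 : ∀ u ∈ augIdeal K A, ∀ v ∈ augIdeal K A, ∀ w ∈ augIdeal K A,
      succT (u * v) w = succT u (succT v w) := by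
    intro u hu
    induction hu using Submodule.span_induction with
    | mem u hu =>
      obtain ⟨l, hl, rfl⟩ := hu
      exact L2gen l hl
    | zero => intro v hv w hw; simp
    | add u u' hu hu' ihu ihu' =>
      intro v hv w hw
      simp only [map_add, LinearMap.add_apply, add_mul, ihu v hv w hw, ihu' v hv w hw]
    | smul c u hu ihu =>
      intro v hv w hw
      simp only [map_smul, LinearMap.smul_apply, smul_mul_assoc, ihu v hv w hw]
  -- Statement 4, generator version
  have L4gen : ∀ n : List A, n ≠ [] → ∀ u ∈ augIdeal K A, ∀ v ∈ augIdeal K A,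
      precT (precT u v) ((n.map (TensorAlgebra.ι K)).prod)
        = precT u (v * (n.map (TensorAlgebra.ι K)).prod) := by
    intro n
    induction n using List.reverseRecOn with
    | nil => intro h; exact absurd rfl h
    | append_singleton n' b ih =>
      intro _ u hu v hv
      rcases eq_or_ne n' [] with rfl | hne
      · simp only [List.nil_append, List.map_cons, List.map_nil, List.prod_cons,
          List.prod_nil, mul_one]
        rw [hp3 b u v hu hv]
      · have hP : (n'.map (TensorAlgebra.ι K)).prod ∈ augIdeal K A := hPmem _ hne
        have h : ((n' ++ [b]).map (TensorAlgebra.ι K)).prod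
            = (n'.map (TensorAlgebra.ι K)).prod * TensorAlgebra.ι K b := by simp
        rw [h, hp3 b (precT u v) _ (hprecI u hu v hv) hP, ih hne u hu v hv,
          ← hp3 b u _ hu (hmulI v hv _ hP), mul_assoc]
  -- Statement 4
  have L4 : ∀ u ∈ augIdeal K A, ∀ v ∈ augIdeal K A, ∀ w ∈ augIdeal K A,
      precT (precT u v) w = precT u (v * w) := by
    intro u hu v hv w hw
    induction hw using Submodule.span_induction with
    | mem w hw =>
      obtain ⟨n, hn, rfl⟩ := hw
      exact L4gen n hn u hu v hv
    | zero => simp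
    | add w w' hw hw' ihw ihw' =>
      simp only [map_add, mul_add, ihw, ihw']
    | smul c w hw ihw =>
      simp only [map_smul, mul_smul_comm, ihw]
  -- Statement 5, single generator on the right
  have L5a : ∀ b : A, ∀ v ∈ augIdeal K A, ∀ u ∈ augIdeal K A,
      precT (u * v) (TensorAlgebra.ι K b)
        = u * precT v (TensorAlgebra.ι K b) := by
    intro b v hv
    induction hv using Submodule.span_induction with
    | mem v hv =>
      intro u hu
      obtain ⟨m, hm, rfl⟩ := hv
      rcases List.eq_nil_or_concat m with rfl | ⟨m', c, rfl⟩
      · exact absurd rfl hm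
      simp only [List.concat_eq_append] at hm ⊢
      rcases eq_or_ne m' [] with rfl | hne
      · simp only [List.nil_append, List.map_cons, List.map_nil, List.prod_cons,
          List.prod_nil, mul_one]
        rw [hp2 c b u hu, hp1]
      · have hP : (m'.map (TensorAlgebra.ι K)).prod ∈ augIdeal K A := hPmem _ hne
        have h : ((m' ++ [c]).map (TensorAlgebra.ι K)).prod
            = (m'.map (TensorAlgebra.ι K)).prod * TensorAlgebra.ι K c := by simp
        rw [h, ← mul_assoc, hp2 c b _ (hmulI u hu _ hP), hp2 c b _ hP, mul_assoc]
    | zero => intro u hu; simp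
    | add v v' hv hv' ihv ihv' =>
      intro u hu
      simp only [mul_add, map_add, LinearMap.add_apply, ihv u hu, ihv' u hu]
    | smul c v hv ihv =>
      intro u hu
      simp only [mul_smul_comm, map_smul, LinearMap.smul_apply, ihv u hu]
  -- Statement 5, generator version on the right
  have L5gen : ∀ n : List A, n ≠ [] → ∀ u ∈ augIdeal K A, ∀ v ∈ augIdeal K A,
      precT (u * v) ((n.map (TensorAlgebra.ι K)).prod)
        = u * precT v ((n.map (TensorAlgebra.ι K)).prod) := by
    intro n
    induction n using List.reverseRecOn with
    | nil => intro h; exact absurd rfl h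
    | append_singleton n' b ih =>
      intro _ u hu v hv
      rcases eq_or_ne n' [] with rfl | hne
      · simpa using L5a b v hv u hu
      · have hP : (n'.map (TensorAlgebra.ι K)).prod ∈ augIdeal K A := hPmem _ hne
        have h : ((n' ++ [b]).map (TensorAlgebra.ι K)).prod
            = (n'.map (TensorAlgebra.ι K)).prod * TensorAlgebra.ι K b := by simp
        rw [h, hp3 b (u * v) _ (hmulI u hu v hv) hP, ih hne u hu v hv,
          L5a b _ (hprecI v hv _ hP) u hu, hp3 b v _ hv hP]
  -- Statement 5
  have L5 : ∀ u ∈ augIdeal K A, ∀ v ∈ augIdeal K A, ∀ w ∈ augIdeal K A,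
      precT (u * v) w = u * precT v w := by
    intro u hu v hv w hw
    induction hw using Submodule.span_induction with
    | mem w hw =>
      obtain ⟨n, hn, rfl⟩ := hw
      exact L5gen n hn u hu v hv
    | zero => simp
    | add w w' hw hw' ihw ihw' =>
      simp only [map_add, mul_add, ihw, ihw']
    | smul c w hw ihw =>
      simp only [map_smul, mul_smul_comm, ihw]
  -- Statement 6, single generators on both sides
  have L6a : ∀ a b : A, ∀ v ∈ augIdeal K A,
      precT (succT (TensorAlgebra.ι K a) v) (TensorAlgebra.ι K b)
        = succT (TensorAlgebra.ι K a) (precT v (TensorAlgebra.ι K b)) := by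
    intro a b v hv
    induction hv using Submodule.span_induction with
    | mem v hv =>
      obtain ⟨m, hm, rfl⟩ := hv
      match m, hm with
      | [c], _ =>
        simp only [List.map_cons, List.map_nil, List.prod_cons, List.prod_nil, mul_one]
        rw [hs1, hp1, hp1, hL, ← hs1]
      | c :: d :: m', _ =>
        have hP : ((d :: m').map (TensorAlgebra.ι K)).prod ∈ augIdeal K A :=
          hPmem _ (by simp)
        have h : ((c :: d :: m').map (TensorAlgebra.ι K)).prod
            = TensorAlgebra.ι K c * ((d :: m').map (TensorAlgebra.ι K)).prod := by simp
        rw [h, hs2 a c _ hP, L5a b _ hP _ (hιmem _), L5a b _ hP _ (hιmem _),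
          hs2 a c _ (hprecIone b _ hP)]
    | zero => simp
    | add v v' hv hv' ihv ihv' =>
      simp only [map_add, LinearMap.add_apply, ihv, ihv']
    | smul c v hv ihv =>
      simp only [map_smul, LinearMap.smul_apply, ihv]
  -- Statement 6, generator version on the left, single on the right
  have L6bgen : ∀ l : List A, l ≠ [] → ∀ b : A, ∀ v ∈ augIdeal K A,
      precT (succT ((l.map (TensorAlgebra.ι K)).prod) v) (TensorAlgebra.ι K b)
        = succT ((l.map (TensorAlgebra.ι K)).prod)
            (precT v (TensorAlgebra.ι K b)) := by
    intro l
    induction l with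
    | nil => intro h; exact absurd rfl h
    | cons a l' ih =>
      intro _ b v hv
      cases l' with
      | nil => simpa using L6a a b v hv
      | cons c l'' =>
        have hne : c :: l'' ≠ [] := by simp
        have hP : ((c :: l'').map (TensorAlgebra.ι K)).prod ∈ augIdeal K A := hPmem _ hne
        have h : ((a :: c :: l'').map (TensorAlgebra.ι K)).prod
            = TensorAlgebra.ι K a * ((c :: l'').map (TensorAlgebra.ι K)).prod := by simp
        rw [h, hs3 a _ v hP hv, L6a a b _ (hsuccI _ hP v hv), ih hne b v hv,
          hs3 a _ _ hP (hprecIone b v hv)]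
  -- Statement 6, single generator on the right
  have L6b : ∀ b : A, ∀ u ∈ augIdeal K A, ∀ v ∈ augIdeal K A,
      precT (succT u v) (TensorAlgebra.ι K b)
        = succT u (precT v (TensorAlgebra.ι K b)) := by
    intro b u hu
    induction hu using Submodule.span_induction with
    | mem u hu =>
      obtain ⟨l, hl, rfl⟩ := hu
      exact L6bgen l hl b
    | zero => intro v hv; simp
    | add u u' hu hu' ihu ihu' =>
      intro v hv
      simp only [map_add, LinearMap.add_apply, ihu v hv, ihu' v hv]
    | smul c u hu ihu =>
      intro v hv
      simp only [map_smul, LinearMap.smul_apply, ihu v hv]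
  -- Statement 6, generator version on the right
  have L6gen : ∀ n : List A, n ≠ [] → ∀ u ∈ augIdeal K A, ∀ v ∈ augIdeal K A,
      precT (succT u v) ((n.map (TensorAlgebra.ι K)).prod)
        = succT u (precT v ((n.map (TensorAlgebra.ι K)).prod)) := by
    intro n
    induction n using List.reverseRecOn with
    | nil => intro h; exact absurd rfl h
    | append_singleton n' b ih =>
      intro _ u hu v hv
      rcases eq_or_ne n' [] with rfl | hne
      · simpa using L6b b u hu v hv
      · have hP : (n'.map (TensorAlgebra.ι K)).prod ∈ augIdeal K A := hPmem _ hne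
        have h : ((n' ++ [b]).map (TensorAlgebra.ι K)).prod
            = (n'.map (TensorAlgebra.ι K)).prod * TensorAlgebra.ι K b := by simp
        rw [h, hp3 b (succT u v) _ (hsuccI u hu v hv) hP, ih hne u hu v hv,
          L6b b u hu _ (hprecI v hv _ hP), hp3 b v _ hv hP]
  -- Statement 6
  have L6 : ∀ u ∈ augIdeal K A, ∀ v ∈ augIdeal K A, ∀ w ∈ augIdeal K A,
      precT (succT u v) w = succT u (precT v w) := by
    intro u hu v hv w hw
    induction hw using Submodule.span_induction with
    | mem w hw =>
      obtain ⟨n, hn, rfl⟩ := hw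
      exact L6gen n hn u hu v hv
    | zero => simp
    | add w w' hw hw' ihw ihw' =>
      simp only [map_add, ihw, ihw']
    | smul c w hw ihw =>
      simp only [map_smul, ihw]
  exact ⟨mul_assoc x y z, L2 x hx y hy z hz, L3 x hx y hy z hz,
    L4 x hx y hy z hz, L5 x hx y hy z hz, L6 x hx y hy z hz⟩
end

section
/- The universal enveloping bigraft algebra functor U_BG, sending an L-algebra A to T̄(A) with concatenation and the extended graft operations, is left adjoint to the forgetful functor from bigraft algebras to L-algebras (which remembers only ≻ and ≺): for every L-algebra A, bigraft algebra B, and L-algebra morphism f : A → B, there exists a unique bigraft algebra morphism f̃ : U_BG(A) → B extending f. -/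
/-!
`T̄(A)` is the free non-unital associative algebra on `A`, so `f` extends uniquely to a linear
map `φ` multiplicative for `*`; it is computed in the unitization of `(B, *)`. That `φ` also
preserves `≻` and `≺` follows by induction on the length of words: the recursions defining the
extended operations peel off one letter at a time (the first letter of the left argument, or
the last letter of the right one), and each peeling step is matched in `B` by one of the
bigraft relations between `*` and `≻`, resp. `*` and `≺`.
-/

open TensorAlgebra

section AugIdeal

variable {K A : Type*} [Field K] [AddCommGroup A] [Module K A]

theorem list_prod_mem_augIdeal {l : List A} (hl : l ≠ []) :
    (l.map (ι K)).prod ∈ augIdeal K A :=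
  Submodule.subset_span ⟨l, hl, rfl⟩

theorem ι_mem_augIdeal (a : A) : ι K a ∈ augIdeal K A := by
  simpa using list_prod_mem_augIdeal (K := K) (List.cons_ne_nil a [])

theorem mul_mem_augIdeal {x y : TensorAlgebra K A} (hx : x ∈ augIdeal K A)
    (hy : y ∈ augIdeal K A) : x * y ∈ augIdeal K A := by
  have hle : augIdeal K A * augIdeal K A ≤ augIdeal K A := by
    rw [augIdeal, Submodule.span_mul_span]
    refine Submodule.span_le.2 ?_
    rintro _ ⟨_, ⟨l, hl, rfl⟩, _, ⟨m, -, rfl⟩, rfl⟩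
    exact Submodule.subset_span ⟨l ++ m, List.append_ne_nil_of_left_ne_nil hl m, by simp⟩
  exact hle (Submodule.mul_mem_mul hx hy)

theorem augIdeal_le_of_cons {p : Submodule K (TensorAlgebra K A)} (hι : ∀ a, ι K a ∈ p)
    (hcons : ∀ a, ∀ w ∈ augIdeal K A, w ∈ p → ι K a * w ∈ p) : augIdeal K A ≤ p := by
  refine Submodule.span_le.2 ?_
  rintro _ ⟨l, hl, rfl⟩
  induction l with
  | nil => exact absurd rfl hl
  | cons a t ih =>
    rcases eq_or_ne t [] with rfl | ht
    · simpa using hι a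
    · simpa using hcons a _ (list_prod_mem_augIdeal ht) (ih ht)

theorem augIdeal_le_of_snoc {p : Submodule K (TensorAlgebra K A)} (hι : ∀ a, ι K a ∈ p)
    (hsnoc : ∀ a, ∀ w ∈ augIdeal K A, w ∈ p → w * ι K a ∈ p) : augIdeal K A ≤ p := by
  refine Submodule.span_le.2 ?_
  rintro _ ⟨l, hl, rfl⟩
  induction l using List.reverseRecOn with
  | nil => exact absurd rfl hl
  | append_singleton t a ih =>
    rcases eq_or_ne t [] with rfl | ht
    · simpa using hι a
    · simpa using hsnoc a _ (list_prod_mem_augIdeal ht) (ih ht)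

theorem augIdeal_linearMap_ext {B : Type*} [AddCommGroup B] [Module K B]
    (μ : B →ₗ[K] B →ₗ[K] B) {φ ψ : augIdeal K A →ₗ[K] B}
    (hφ : ∀ (x y : TensorAlgebra K A) (hx : x ∈ augIdeal K A) (hy : y ∈ augIdeal K A)
      (hxy : x * y ∈ augIdeal K A), φ ⟨x * y, hxy⟩ = μ (φ ⟨x, hx⟩) (φ ⟨y, hy⟩))
    (hψ : ∀ (x y : TensorAlgebra K A) (hx : x ∈ augIdeal K A) (hy : y ∈ augIdeal K A)
      (hxy : x * y ∈ augIdeal K A), ψ ⟨x * y, hxy⟩ = μ (ψ ⟨x, hx⟩) (ψ ⟨y, hy⟩))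
    (hι : ∀ a, φ ⟨ι K a, ι_mem_augIdeal a⟩ = ψ ⟨ι K a, ι_mem_augIdeal a⟩) : φ = ψ := by
  suffices augIdeal K A ≤ (LinearMap.eqLocus φ ψ).map (augIdeal K A).subtype by
    ext ⟨x, hx⟩
    obtain ⟨y, hy, rfl⟩ := this hx
    exact hy
  refine augIdeal_le_of_cons (fun a => ⟨_, hι a, rfl⟩) ?_
  rintro a _ - ⟨w, hw, rfl⟩
  have ha := ι_mem_augIdeal (K := K) a
  refine ⟨⟨ι K a * w, mul_mem_augIdeal ha w.2⟩, ?_, rfl⟩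
  change φ _ = ψ _
  rw [hφ _ _ ha w.2, hψ _ _ ha w.2, hι a]
  exact congrArg _ hw

end AugIdeal

section Unitization

variable {K A R : Type*} [Field K] [AddCommGroup A] [Module K A]
  [NonUnitalRing R] [Module K R] [IsScalarTower K R R] [SMulCommClass K R R]

noncomputable def augLift (g : A →ₗ[K] R) : TensorAlgebra K A →ₗ[K] R :=
  Unitization.sndHom K K R ∘ₗ (lift K (Unitization.inrHom K K R ∘ₗ g)).toLinearMap

theorem augLift_ι (g : A →ₗ[K] R) (a : A) : augLift g (ι K a) = g a := by
  simp [augLift]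

theorem fst_lift_inr_eq_zero (g : A →ₗ[K] R) {x : TensorAlgebra K A}
    (hx : x ∈ augIdeal K A) : (lift K (Unitization.inrHom K K R ∘ₗ g) x).fst = 0 := by
  set F := lift K (Unitization.inrHom K K R ∘ₗ g)
  have hF : ∀ a, (F (ι K a)).fst = 0 := fun a => by simp [F]
  refine augIdeal_le_of_cons (p := LinearMap.ker ((Unitization.fstHom K R).comp F).toLinearMap)
    (fun a => hF a) (fun a w _ _ => ?_) hx
  simp [hF a]

theorem augLift_mul (g : A →ₗ[K] R) {x y : TensorAlgebra K A} (hx : x ∈ augIdeal K A)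
    (hy : y ∈ augIdeal K A) : augLift g (x * y) = augLift g x * augLift g y := by
  simp [augLift, Unitization.snd_mul, fst_lift_inr_eq_zero g hx, fst_lift_inr_eq_zero g hy]

end Unitization

theorem exists_linearMap_ι_mul {K A B : Type*} [Field K] [AddCommGroup A] [Module K A]
    [AddCommGroup B] [Module K B] (μ : B →ₗ[K] B →ₗ[K] B)
    (hμ : ∀ x y z : B, μ (μ x y) z = μ x (μ y z)) (g : A →ₗ[K] B) :
    ∃ Φ : TensorAlgebra K A →ₗ[K] B, (∀ a, Φ (ι K a) = g a) ∧
      ∀ x ∈ augIdeal K A, ∀ y ∈ augIdeal K A, Φ (x * y) = μ (Φ x) (Φ y) := by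
  let : NonUnitalRing B :=
    { (inferInstance : AddCommGroup B) with
      mul := fun x y => μ x y
      left_distrib := fun x y z => map_add (μ x) y z
      right_distrib := fun x y z => LinearMap.map_add₂ μ x y z
      zero_mul := fun x => LinearMap.map_zero₂ μ x
      mul_zero := fun x => map_zero (μ x)
      mul_assoc := hμ }
  have : IsScalarTower K B B := ⟨fun k x y => LinearMap.map_smul₂ μ k x y⟩
  have : SMulCommClass K B B := ⟨fun k x y => (map_smul (μ x) k y).symm⟩
  exact ⟨augLift g, augLift_ι g, fun x hx y hy => augLift_mul g hx hy⟩

section Graft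

variable {K A : Type*} [Field K] [AddCommGroup A] [Module K A]

/-- The recursion `(a₁⋯a_p) ≻ (b₁⋯b_q) = (a₁≻(⋯(a_p≻b₁)⋯))b₂⋯b_q` defining `≻` on `T̄(A)`. -/
structure IsSuccExtension (succA : A →ₗ[K] A →ₗ[K] A)
    (succT : TensorAlgebra K A →ₗ[K] TensorAlgebra K A →ₗ[K] TensorAlgebra K A) : Prop where
  ι_ι : ∀ a b : A, succT (ι K a) (ι K b) = ι K (succA a b)
  ι_ι_mul : ∀ (a b : A) (y : TensorAlgebra K A), y ∈ augIdeal K A →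
    succT (ι K a) (ι K b * y) = ι K (succA a b) * y
  ι_mul_left : ∀ (a : A) (x y : TensorAlgebra K A), x ∈ augIdeal K A → y ∈ augIdeal K A →
    succT (ι K a * x) y = succT (ι K a) (succT x y)

/-- The recursion `(a₁⋯a_p) ≺ (b₁⋯b_q) = a₁⋯a_{p−1}((⋯(a_p≺b₁)⋯)≺b_q)` defining `≺` on
`T̄(A)`. -/
structure IsPrecExtension (precA : A →ₗ[K] A →ₗ[K] A)
    (precT : TensorAlgebra K A →ₗ[K] TensorAlgebra K A →ₗ[K] TensorAlgebra K A) : Prop where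
  ι_ι : ∀ a b : A, precT (ι K a) (ι K b) = ι K (precA a b)
  mul_ι_ι : ∀ (a b : A) (x : TensorAlgebra K A), x ∈ augIdeal K A →
    precT (x * ι K a) (ι K b) = x * ι K (precA a b)
  mul_ι_right : ∀ (b : A) (x y : TensorAlgebra K A), x ∈ augIdeal K A → y ∈ augIdeal K A →
    precT x (y * ι K b) = precT (precT x y) (ι K b)

variable {succA precA : A →ₗ[K] A →ₗ[K] A}
  {succT precT : TensorAlgebra K A →ₗ[K] TensorAlgebra K A →ₗ[K] TensorAlgebra K A}
  {B : Type*} [AddCommGroup B] [Module K B] {starB succB precB : B →ₗ[K] B →ₗ[K] B}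
  {Φ : TensorAlgebra K A →ₗ[K] B}

theorem IsSuccExtension.succ_mem (hs : IsSuccExtension succA succT) {x y : TensorAlgebra K A}
    (hx : x ∈ augIdeal K A) (hy : y ∈ augIdeal K A) : succT x y ∈ augIdeal K A := by
  have hι : ∀ a, augIdeal K A ≤ (augIdeal K A).comap (succT (ι K a)) := fun a =>
    augIdeal_le_of_cons (fun b => by simpa [hs.ι_ι] using ι_mem_augIdeal _)
      (fun b w hw _ => by
        simpa [hs.ι_ι_mul a b w hw] using mul_mem_augIdeal (ι_mem_augIdeal _) hw)
  refine augIdeal_le_of_cons (p := (augIdeal K A).comap (succT.flip y)) (fun a => hι a hy)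
    (fun a w hw hwy => ?_) hx
  simp only [Submodule.mem_comap, LinearMap.flip_apply] at hwy ⊢
  rw [hs.ι_mul_left a w y hw hy]
  exact hι a hwy

theorem IsSuccExtension.map_succ (hs : IsSuccExtension succA succT)
    (hB2 : ∀ x y z : B, succB (starB x y) z = succB x (succB y z))
    (hB3 : ∀ x y z : B, starB (succB x y) z = succB x (starB y z))
    (hΦmul : ∀ x ∈ augIdeal K A, ∀ y ∈ augIdeal K A, Φ (x * y) = starB (Φ x) (Φ y))
    (hΦsucc : ∀ a b, Φ (ι K (succA a b)) = succB (Φ (ι K a)) (Φ (ι K b)))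
    {x y : TensorAlgebra K A} (hx : x ∈ augIdeal K A) (hy : y ∈ augIdeal K A) :
    Φ (succT x y) = succB (Φ x) (Φ y) := by
  have hι : ∀ a, ∀ z ∈ augIdeal K A, Φ (succT (ι K a) z) = succB (Φ (ι K a)) (Φ z) := by
    intro a
    refine augIdeal_le_of_cons
      (p := LinearMap.eqLocus (Φ ∘ₗ succT (ι K a)) (succB (Φ (ι K a)) ∘ₗ Φ))
      (fun b => by simp [hs.ι_ι, hΦsucc]) (fun b w hw _ => ?_)
    simp only [LinearMap.mem_eqLocus, LinearMap.comp_apply]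
    rw [hs.ι_ι_mul a b w hw, hΦmul _ (ι_mem_augIdeal _) _ hw, hΦmul _ (ι_mem_augIdeal _) _ hw,
      hΦsucc, hB3]
  refine augIdeal_le_of_cons
    (p := LinearMap.eqLocus (Φ ∘ₗ succT.flip y) (succB.flip (Φ y) ∘ₗ Φ))
    (fun a => hι a y hy) (fun a w hw hwy => ?_) hx
  simp only [LinearMap.mem_eqLocus, LinearMap.comp_apply, LinearMap.flip_apply] at hwy ⊢
  rw [hs.ι_mul_left a w y hw hy, hι a _ (hs.succ_mem hw hy), hwy,
    hΦmul _ (ι_mem_augIdeal a) _ hw, hB2]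

theorem IsPrecExtension.prec_mem (hp : IsPrecExtension precA precT) {x y : TensorAlgebra K A}
    (hx : x ∈ augIdeal K A) (hy : y ∈ augIdeal K A) : precT x y ∈ augIdeal K A := by
  have hι : ∀ b, augIdeal K A ≤ (augIdeal K A).comap (precT.flip (ι K b)) := fun b =>
    augIdeal_le_of_snoc (fun a => by simpa [hp.ι_ι] using ι_mem_augIdeal _)
      (fun a w hw _ => by
        simpa [hp.mul_ι_ι a b w hw] using mul_mem_augIdeal hw (ι_mem_augIdeal _))
  refine augIdeal_le_of_snoc (p := (augIdeal K A).comap (precT x)) (fun b => hι b hx)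
    (fun b w hw hxw => ?_) hy
  simp only [Submodule.mem_comap] at hxw ⊢
  rw [hp.mul_ι_right b x w hx hw]
  exact hι b hxw

theorem IsPrecExtension.map_prec (hp : IsPrecExtension precA precT)
    (hB4 : ∀ x y z : B, precB (precB x y) z = precB x (starB y z))
    (hB5 : ∀ x y z : B, precB (starB x y) z = starB x (precB y z))
    (hΦmul : ∀ x ∈ augIdeal K A, ∀ y ∈ augIdeal K A, Φ (x * y) = starB (Φ x) (Φ y))
    (hΦprec : ∀ a b, Φ (ι K (precA a b)) = precB (Φ (ι K a)) (Φ (ι K b)))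
    {x y : TensorAlgebra K A} (hx : x ∈ augIdeal K A) (hy : y ∈ augIdeal K A) :
    Φ (precT x y) = precB (Φ x) (Φ y) := by
  have hι : ∀ b, ∀ z ∈ augIdeal K A, Φ (precT z (ι K b)) = precB (Φ z) (Φ (ι K b)) := by
    intro b
    refine augIdeal_le_of_snoc
      (p := LinearMap.eqLocus (Φ ∘ₗ precT.flip (ι K b)) (precB.flip (Φ (ι K b)) ∘ₗ Φ))
      (fun a => by simp [hp.ι_ι, hΦprec]) (fun a w hw _ => ?_)
    simp only [LinearMap.mem_eqLocus, LinearMap.comp_apply, LinearMap.flip_apply]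
    rw [hp.mul_ι_ι a b w hw, hΦmul _ hw _ (ι_mem_augIdeal _), hΦmul _ hw _ (ι_mem_augIdeal _),
      hΦprec, hB5]
  refine augIdeal_le_of_snoc (p := LinearMap.eqLocus (Φ ∘ₗ precT x) (precB (Φ x) ∘ₗ Φ))
    (fun b => hι b x hx) (fun b w hw hxw => ?_) hy
  simp only [LinearMap.mem_eqLocus, LinearMap.comp_apply] at hxw ⊢
  rw [hp.mul_ι_right b x w hx hw, hι b _ (hp.prec_mem hx hw), hxw,
    hΦmul _ hw _ (ι_mem_augIdeal b), hB4]

end Graft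

theorem U_BG_left_adjoint_general
    {K A : Type*} [Field K] [AddCommGroup A] [Module K A]
    -- the L-algebra A
    (succA precA : A →ₗ[K] A →ₗ[K] A)
    -- the operations of U_BG(A) on T̄(A)
    (succT precT : TensorAlgebra K A →ₗ[K] TensorAlgebra K A →ₗ[K] TensorAlgebra K A)
    (hs1 : ∀ a b : A,
      succT (TensorAlgebra.ι K a) (TensorAlgebra.ι K b) = TensorAlgebra.ι K (succA a b))
    (hs2 : ∀ (a b : A) (y : TensorAlgebra K A), y ∈ augIdeal K A →
      succT (TensorAlgebra.ι K a) (TensorAlgebra.ι K b * y)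
        = TensorAlgebra.ι K (succA a b) * y)
    (hs3 : ∀ (a : A) (x y : TensorAlgebra K A), x ∈ augIdeal K A → y ∈ augIdeal K A →
      succT (TensorAlgebra.ι K a * x) y = succT (TensorAlgebra.ι K a) (succT x y))
    (hp1 : ∀ a b : A,
      precT (TensorAlgebra.ι K a) (TensorAlgebra.ι K b) = TensorAlgebra.ι K (precA a b))
    (hp2 : ∀ (a b : A) (x : TensorAlgebra K A), x ∈ augIdeal K A →
      precT (x * TensorAlgebra.ι K a) (TensorAlgebra.ι K b)
        = x * TensorAlgebra.ι K (precA a b))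
    (hp3 : ∀ (b : A) (x y : TensorAlgebra K A), x ∈ augIdeal K A → y ∈ augIdeal K A →
      precT x (y * TensorAlgebra.ι K b) = precT (precT x y) (TensorAlgebra.ι K b))
    -- a bigraft algebra B
    {B : Type*} [AddCommGroup B] [Module K B]
    (starB succB precB : B →ₗ[K] B →ₗ[K] B)
    (hB1 : ∀ x y z : B, starB (starB x y) z = starB x (starB y z))
    (hB2 : ∀ x y z : B, succB (starB x y) z = succB x (succB y z))
    (hB3 : ∀ x y z : B, starB (succB x y) z = succB x (starB y z))
    (hB4 : ∀ x y z : B, precB (precB x y) z = precB x (starB y z))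
    (hB5 : ∀ x y z : B, precB (starB x y) z = starB x (precB y z))
    -- an L-algebra morphism f : A → B
    (f : A →ₗ[K] B)
    (hf_succ : ∀ a a' : A, f (succA a a') = succB (f a) (f a'))
    (hf_prec : ∀ a a' : A, f (precA a a') = precB (f a) (f a')) :
    -- unique extension to a bigraft morphism on U_BG(A) = T̄(A)
    ∃! φ : ↥(augIdeal K A) →ₗ[K] B,
      (∀ (x y : TensorAlgebra K A) (hx : x ∈ augIdeal K A) (hy : y ∈ augIdeal K A)
          (hxy : x * y ∈ augIdeal K A),
          φ ⟨x * y, hxy⟩ = starB (φ ⟨x, hx⟩) (φ ⟨y, hy⟩)) ∧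
      (∀ (x y : TensorAlgebra K A) (hx : x ∈ augIdeal K A) (hy : y ∈ augIdeal K A)
          (hxy : succT x y ∈ augIdeal K A),
          φ ⟨succT x y, hxy⟩ = succB (φ ⟨x, hx⟩) (φ ⟨y, hy⟩)) ∧
      (∀ (x y : TensorAlgebra K A) (hx : x ∈ augIdeal K A) (hy : y ∈ augIdeal K A)
          (hxy : precT x y ∈ augIdeal K A),
          φ ⟨precT x y, hxy⟩ = precB (φ ⟨x, hx⟩) (φ ⟨y, hy⟩)) ∧
      (∀ (a : A) (h : TensorAlgebra.ι K a ∈ augIdeal K A),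
          φ ⟨TensorAlgebra.ι K a, h⟩ = f a) := by
  obtain ⟨Φ, hΦι, hΦmul⟩ := exists_linearMap_ι_mul starB hB1 f
  have hs : IsSuccExtension succA succT := ⟨hs1, hs2, hs3⟩
  have hp : IsPrecExtension precA precT := ⟨hp1, hp2, hp3⟩
  have hΦsucc : ∀ a b, Φ (ι K (succA a b)) = succB (Φ (ι K a)) (Φ (ι K b)) := by
    simp [hΦι, hf_succ]
  have hΦprec : ∀ a b, Φ (ι K (precA a b)) = precB (Φ (ι K a)) (Φ (ι K b)) := by
    simp [hΦι, hf_prec]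
  refine ⟨Φ ∘ₗ (augIdeal K A).subtype,
    ⟨fun x y hx hy _ => hΦmul x hx y hy,
      fun x y hx hy _ => hs.map_succ hB2 hB3 hΦmul hΦsucc hx hy,
      fun x y hx hy _ => hp.map_prec hB4 hB5 hΦmul hΦprec hx hy,
      fun a _ => hΦι a⟩, ?_⟩
  rintro φ ⟨hφmul, -, -, hφι⟩
  exact augIdeal_linearMap_ext starB hφmul (fun x y hx hy _ => hΦmul x hx y hy)
    (fun a => (hφι a _).trans (hΦι a).symm)

/-- the universal enveloping bigraft algebra `U_BG(A) = T̄(A)` of an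
L-algebra `A` (with concatenation and the extended graft operations
`(a₁⋯a_p) ≻ (b₁⋯b_q) = (a₁≻(⋯(a_p≻b₁)⋯))·b₂⋯b_q`,
`(a₁⋯a_p) ≺ (b₁⋯b_q) = a₁⋯a_{p−1}·((⋯(a_p≺b₁)⋯)≺b_q)`)
is left adjoint to the forgetful functor from bigraft algebras to L-algebras: every
L-algebra morphism `f : A → B` into a bigraft algebra `B` extends uniquely to a
bigraft algebra morphism `f̃ : U_BG(A) → B`. -/
theorem U_BG_left_adjoint
    {K A : Type*} [Field K] [AddCommGroup A] [Module K A]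
    -- the L-algebra A
    (succA precA : A →ₗ[K] A →ₗ[K] A)
    (hL : ∀ x y z : A, precA (succA x y) z = succA x (precA y z))
    -- the operations of U_BG(A) on T̄(A)
    (succT precT : TensorAlgebra K A →ₗ[K] TensorAlgebra K A →ₗ[K] TensorAlgebra K A)
    (hs1 : ∀ a b : A,
      succT (TensorAlgebra.ι K a) (TensorAlgebra.ι K b) = TensorAlgebra.ι K (succA a b))
    (hs2 : ∀ (a b : A) (y : TensorAlgebra K A), y ∈ augIdeal K A →
      succT (TensorAlgebra.ι K a) (TensorAlgebra.ι K b * y)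
        = TensorAlgebra.ι K (succA a b) * y)
    (hs3 : ∀ (a : A) (x y : TensorAlgebra K A), x ∈ augIdeal K A → y ∈ augIdeal K A →
      succT (TensorAlgebra.ι K a * x) y = succT (TensorAlgebra.ι K a) (succT x y))
    (hp1 : ∀ a b : A,
      precT (TensorAlgebra.ι K a) (TensorAlgebra.ι K b) = TensorAlgebra.ι K (precA a b))
    (hp2 : ∀ (a b : A) (x : TensorAlgebra K A), x ∈ augIdeal K A →
      precT (x * TensorAlgebra.ι K a) (TensorAlgebra.ι K b)
        = x * TensorAlgebra.ι K (precA a b))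
    (hp3 : ∀ (b : A) (x y : TensorAlgebra K A), x ∈ augIdeal K A → y ∈ augIdeal K A →
      precT x (y * TensorAlgebra.ι K b) = precT (precT x y) (TensorAlgebra.ι K b))
    -- a bigraft algebra B
    {B : Type*} [AddCommGroup B] [Module K B]
    (starB succB precB : B →ₗ[K] B →ₗ[K] B)
    (hB1 : ∀ x y z : B, starB (starB x y) z = starB x (starB y z))
    (hB2 : ∀ x y z : B, succB (starB x y) z = succB x (succB y z))
    (hB3 : ∀ x y z : B, starB (succB x y) z = succB x (starB y z))
    (hB4 : ∀ x y z : B, precB (precB x y) z = precB x (starB y z))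
    (hB5 : ∀ x y z : B, precB (starB x y) z = starB x (precB y z))
    (hB6 : ∀ x y z : B, precB (succB x y) z = succB x (precB y z))
    -- an L-algebra morphism f : A → B
    (f : A →ₗ[K] B)
    (hf_succ : ∀ a a' : A, f (succA a a') = succB (f a) (f a'))
    (hf_prec : ∀ a a' : A, f (precA a a') = precB (f a) (f a')) :
    -- unique extension to a bigraft morphism on U_BG(A) = T̄(A)
    ∃! φ : ↥(augIdeal K A) →ₗ[K] B,
      (∀ (x y : TensorAlgebra K A) (hx : x ∈ augIdeal K A) (hy : y ∈ augIdeal K A)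
          (hxy : x * y ∈ augIdeal K A),
          φ ⟨x * y, hxy⟩ = starB (φ ⟨x, hx⟩) (φ ⟨y, hy⟩)) ∧
      (∀ (x y : TensorAlgebra K A) (hx : x ∈ augIdeal K A) (hy : y ∈ augIdeal K A)
          (hxy : succT x y ∈ augIdeal K A),
          φ ⟨succT x y, hxy⟩ = succB (φ ⟨x, hx⟩) (φ ⟨y, hy⟩)) ∧
      (∀ (x y : TensorAlgebra K A) (hx : x ∈ augIdeal K A) (hy : y ∈ augIdeal K A)
          (hxy : precT x y ∈ augIdeal K A),
          φ ⟨precT x y, hxy⟩ = precB (φ ⟨x, hx⟩) (φ ⟨y, hy⟩)) ∧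
      (∀ (a : A) (h : TensorAlgebra.ι K a ∈ augIdeal K A),
          φ ⟨TensorAlgebra.ι K a, h⟩ = f a) :=
  U_BG_left_adjoint_general succA precA succT precT hs1 hs2 hs3 hp1 hp2 hp3 starB succB precB hB1
    hB2 hB3 hB4 hB5 f hf_succ hf_prec
end
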